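/- arXiv:1902.02018 — 4 statements merged into one kernel-verified Lean document; each statement's English description precedes it below -/
import Mathlib

section
/- Let β = [[0,0,1],[0,1,0],[1,0,0]] and n(x,y), n'(x,y), h(x) as defined. For any (x,y) ∈ E² with x·x̄ + y + ȳ = 0 and y ≠ 0, one has the identity β · n(x,y) = n(ȳ⁻¹x, y⁻¹) · h(ȳ⁻¹) · n'(-ȳ⁻¹x̄, y⁻¹) of matrices in GL₃(E). -/
open Matrix

/-- The antidiagonal Hermitian form matrix β. -/
noncomputable def betaMat (E : Type*) [Field E] : Matrix (Fin 3) (Fin 3) E :=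
  !![0, 0, 1; 0, 1, 0; 1, 0, 0]

/-- The upper unipotent matrix n(x,y). -/
noncomputable def nMat {E : Type*} [Field E] (σ : E →+* E) (x y : E) :
    Matrix (Fin 3) (Fin 3) E :=
  !![1, x, y; 0, 1, -σ x; 0, 0, 1]

/-- The lower unipotent matrix n'(x,y). -/
noncomputable def n'Mat {E : Type*} [Field E] (σ : E →+* E) (x y : E) :
    Matrix (Fin 3) (Fin 3) E :=
  !![1, 0, 0; x, 1, 0; y, -σ x, 1]

/-- The diagonal torus element h(z) = diag(z, -z̄·z⁻¹, z̄⁻¹). -/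
noncomputable def hMat {E : Type*} [Field E] (σ : E →+* E) (z : E) :
    Matrix (Fin 3) (Fin 3) E :=
  Matrix.diagonal ![z, -σ z * z⁻¹, (σ z)⁻¹]

/-- for x·x̄ + y + ȳ = 0 and y ≠ 0, one has
β·n(x,y) = n(ȳ⁻¹x, y⁻¹) · h(ȳ⁻¹) · n'(-ȳ⁻¹x̄, y⁻¹). -/
theorem beta_mul_nMat {E : Type*} [Field E] (σ : E →+* E)
    (hinv : Function.Involutive σ) (x y : E)
    (hxy : x * σ x + y + σ y = 0) (hy : y ≠ 0) :
    betaMat E * nMat σ x y =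
      nMat σ ((σ y)⁻¹ * x) y⁻¹ * hMat σ (σ y)⁻¹ *
        n'Mat σ (-((σ y)⁻¹ * σ x)) y⁻¹ := by
  have hy' : σ y ≠ 0 := fun h => hy (by simpa [hinv y] using congrArg σ h)
  have h1 : σ (σ y)⁻¹ = y⁻¹ := by rw [map_inv₀, hinv]
  have h2 : σ ((σ y)⁻¹ * x) = y⁻¹ * σ x := by rw [_root_.map_mul, h1]
  have h4 : σ (-((σ y)⁻¹ * σ x)) = -(y⁻¹ * x) := by
    rw [map_neg, _root_.map_mul, h1, hinv]
  have hh : hMat σ (σ y)⁻¹ =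
      !![(σ y)⁻¹, 0, 0; 0, -(y⁻¹) * ((σ y)⁻¹)⁻¹, 0; 0, 0, (y⁻¹)⁻¹] := by
    unfold hMat
    rw [h1]
    ext i j
    fin_cases i <;> fin_cases j <;> simp [Matrix.diagonal, Matrix.vecHead, Matrix.vecTail]
  rw [betaMat, nMat, nMat, n'Mat, hh, h2, h4, inv_inv, inv_inv]
  rw [Matrix.mul_fin_three, Matrix.mul_fin_three, Matrix.mul_fin_three]
  have key : x * σ x = -(y + σ y) := by linear_combination hxy
  ext i j
  fin_cases i <;> fin_cases j <;>
    simp <;> field_simp <;>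
      first
        | linear_combination (-y) * hxy
        | linear_combination y * hxy
        | linear_combination hxy
        | linear_combination (-1) * hxy
        | ring
end

section
/- Let B act on C_c^∞(N) via the twisted right-translation action coming from the identification Φ of κ_ε with C_c^∞(N) (where ε is a smooth character of B). If V ⊆ C_c^∞(N) is a nonzero subspace stable under this B-action, then V contains the characteristic function 1_{N_k} for some k ∈ ℤ, and consequently V = C_c^∞(N). In particular the B-representation κ_ε is irreducible. -/
open scoped Pointwise

section AuxCnt
open MulAction Fintype

lemma aux_cnt {p : ℕ} [hp : Fact p.Prime] {G : Type*} [Group G] {α : Type*} [MulAction G α]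
    [Finite α]
    (horb : ∀ x : α, ∃ n : ℕ, Nat.card (MulAction.orbit G x) = p ^ n) :
    Nat.card α ≡ Nat.card (MulAction.fixedPoints G α) [MOD p] := by
  have := Fintype.ofFinite α
  have := Fintype.ofFinite (fixedPoints G α)
  rw [Nat.card_eq_fintype_card, Nat.card_eq_fintype_card]
  classical
    calc
      card α = card (Σy : Quotient (orbitRel G α), { x // Quotient.mk'' x = y }) :=
        card_congr (Equiv.sigmaFiberEquiv (@Quotient.mk'' _ (orbitRel G α))).symm
      _ = ∑ a : Quotient (orbitRel G α), card { x // Quotient.mk'' x = a } := card_sigma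
      _ ≡ ∑ _a : fixedPoints G α, 1 [MOD p] := ?_
      _ = _ := by simp
    rw [← ZMod.natCast_eq_natCast_iff _ _ p, Nat.cast_sum, Nat.cast_sum]
    have key :
      ∀ x,
        card { y // (Quotient.mk'' y : Quotient (orbitRel G α)) = Quotient.mk'' x } =
          card (orbit G x) :=
      fun x => by simp only [Quotient.eq'']; congr
    refine
      Eq.symm
        (Finset.sum_bij_ne_zero (fun a _ _ => Quotient.mk'' a.1) (fun _ _ _ => Finset.mem_univ _)
          (fun a₁ _ _ a₂ _ _ h =>
            Subtype.eq (mem_fixedPoints'.mp a₂.2 a₁.1 (Quotient.exact' h)))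
          (fun b => Quotient.inductionOn' b fun b _ hb => ?_) fun a ha _ => by
          rw [key, mem_fixedPoints_iff_card_orbit_eq_one.mp a.2])
    obtain ⟨k, hk⟩ := horb b
    rw [Nat.card_eq_fintype_card] at hk
    have : k = 0 := by
      contrapose! hb
      simp [-Quotient.eq, key, hk, hb]
    exact
      ⟨⟨b, mem_fixedPoints_iff_card_orbit_eq_one.2 <| by rw [hk, this, pow_zero]⟩,
        Finset.mem_univ _, ne_of_eq_of_ne Nat.cast_one one_ne_zero, rfl⟩

end AuxCnt

section Aux
variable {N : Type*} [Group N] [TopologicalSpace N] [IsTopologicalGroup N] (c : ℤ → Subgroup N)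

lemma aux_small (hantitone : ∀ k l : ℤ, k ≤ l → c l ≤ c k)
    (hcompact : ∀ k, IsCompact (c k : Set N)) (hopen : ∀ k, IsOpen (c k : Set N))
    (hsep : ⋂ k : ℤ, (c k : Set N) = {1}) {U : Set N} (hU : IsOpen U) (h1 : (1:N) ∈ U) :
    ∃ l, (c l : Set N) ⊆ U := by
  have hempty : (c 0 : Set N) ∩ ⋂ k : ℤ, ((c k : Set N) ∩ Uᶜ) = ∅ := by
    apply Set.eq_empty_of_subset_empty
    rintro x ⟨-, hx⟩
    simp only [Set.mem_iInter, Set.mem_inter_iff, Set.mem_compl_iff] at hx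
    have h1' : x ∈ ⋂ k : ℤ, (c k : Set N) := Set.mem_iInter.2 fun k => (hx k).1
    rw [hsep, Set.mem_singleton_iff] at h1'
    subst h1'
    exact absurd h1 (hx 0).2
  obtain ⟨t, ht⟩ := (hcompact 0).elim_finite_subfamily_closed
      (fun k : ℤ => (c k : Set N) ∩ Uᶜ)
      (fun k => (Subgroup.isClosed_of_isOpen _ (hopen k)).inter hU.isClosed_compl) hempty
  refine ⟨(insert (0:ℤ) t).max' (by simp), fun x hx => ?_⟩
  by_contra hxU
  have hmax : ∀ k ∈ insert (0:ℤ) t, k ≤ (insert (0:ℤ) t).max' (by simp) :=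
    fun k hk => Finset.le_max' _ k hk
  have hx0 : x ∈ (c 0 : Set N) :=
    hantitone 0 _ (hmax 0 (Finset.mem_insert_self _ _)) hx
  have hmem : x ∈ (c 0 : Set N) ∩ ⋂ k ∈ t, ((c k : Set N) ∩ Uᶜ) := by
    refine ⟨hx0, Set.mem_iInter₂.2 fun k hk => ⟨?_, hxU⟩⟩
    exact hantitone k _ (hmax k (Finset.mem_insert_of_mem hk)) hx
  rw [ht] at hmem
  exact hmem

lemma aux_supp (hantitone : ∀ k l : ℤ, k ≤ l → c l ≤ c k)
    (hopen : ∀ k, IsOpen (c k : Set N)) (hexh : ⋃ k : ℤ, (c k : Set N) = Set.univ)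
    {K : Type*} [Zero K] {f : N → K} (hf : HasCompactSupport f) :
    ∃ k, ∀ x, f x ≠ 0 → x ∈ c k := by
  obtain ⟨t, ht⟩ := hf.elim_finite_subcover (fun k : ℤ => (c k : Set N)) hopen
    (by rw [hexh]; exact Set.subset_univ _)
  refine ⟨(insert (0:ℤ) t).min' (by simp), fun x hx => ?_⟩
  have hxs : x ∈ tsupport f := subset_tsupport f hx
  obtain ⟨i, hi, hxi⟩ := Set.mem_iUnion₂.1 (ht hxs)
  exact hantitone _ i (Finset.min'_le _ i (Finset.mem_insert_of_mem hi)) hxi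

lemma aux_unif_right (hantitone : ∀ k l : ℤ, k ≤ l → c l ≤ c k)
    (hcompact : ∀ k, IsCompact (c k : Set N)) (hopen : ∀ k, IsOpen (c k : Set N))
    (hsep : ⋂ k : ℤ, (c k : Set N) = {1})
    {K : Type*} [Zero K] {f : N → K} (hlc : IsLocallyConstant f)
    (hcs : HasCompactSupport f) :
    ∃ l, ∀ x v, v ∈ c l → f (x * v) = f x := by
  have key : ∀ x : N, ∃ l, ∀ v ∈ c l, f (x * v) = f x := by
    intro x
    have hop : IsOpen ((fun v => x * v) ⁻¹' (f ⁻¹' {f x})) :=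
      (hlc {f x}).preimage (continuous_mul_left x)
    obtain ⟨l, hl⟩ := aux_small c hantitone hcompact hopen hsep hop (by simp)
    exact ⟨l, fun v hv => hl hv⟩
  choose lx hlx using key
  set U : N → Set N := fun x => (fun y => x⁻¹ * y) ⁻¹' (c (lx x) : Set N) with hUdef
  have hUopen : ∀ x, IsOpen (U x) := fun x => (hopen _).preimage (continuous_mul_left _)
  have hUmem : ∀ x, x ∈ U x := fun x => by
    simp only [hUdef, Set.mem_preimage, inv_mul_cancel]
    exact (c (lx x)).one_mem
  obtain ⟨t, ht⟩ := hcs.elim_nhds_subcover U (fun x _ => (hUopen x).mem_nhds (hUmem x))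
  refine ⟨((insert (0:ℤ) (t.image lx))).max' (by simp), fun x v hv => ?_⟩
  have hvlx : ∀ i ∈ t, v ∈ c (lx i) := by
    intro i hi
    refine hantitone _ _ (Finset.le_max' _ _ ?_) hv
    exact Finset.mem_insert_of_mem (Finset.mem_image_of_mem lx hi)
  by_cases hx : ∃ i ∈ t, x ∈ U i
  · obtain ⟨i, hi, hxi⟩ := hx
    have hxi' : i⁻¹ * x ∈ c (lx i) := hxi
    have h1 : f x = f i := by
      have := hlx i _ hxi'
      rwa [mul_inv_cancel_left] at this
    have h2 : f (x * v) = f i := by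
      have hm : (i⁻¹ * x) * v ∈ c (lx i) := mul_mem hxi' (hvlx i hi)
      have := hlx i _ hm
      rwa [← mul_assoc, mul_inv_cancel_left] at this
    rw [h2, h1]
  · push_neg at hx
    have hfx : f x = 0 := by
      by_contra h
      obtain ⟨i, hi, hxi⟩ := Set.mem_iUnion₂.1 (ht.2 (subset_tsupport f h))
      exact hx i hi hxi
    have hfxv : f (x * v) = 0 := by
      by_contra h
      obtain ⟨i, hi, hxi⟩ := Set.mem_iUnion₂.1 (ht.2 (subset_tsupport f h))
      have hxi' : i⁻¹ * (x * v) ∈ (c (lx i) : Set N) := hxi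
      have : i⁻¹ * x ∈ c (lx i) := by
        have := mul_mem hxi' (inv_mem (hvlx i hi))
        rwa [show i⁻¹ * (x * v) * v⁻¹ = i⁻¹ * x by group] at this
      exact hx i hi this
    rw [hfx, hfxv]

lemma aux_unif_left (hantitone : ∀ k l : ℤ, k ≤ l → c l ≤ c k)
    (hcompact : ∀ k, IsCompact (c k : Set N)) (hopen : ∀ k, IsOpen (c k : Set N))
    (hsep : ⋂ k : ℤ, (c k : Set N) = {1})
    {K : Type*} [Zero K] {f : N → K} (hlc : IsLocallyConstant f)
    (hcs : HasCompactSupport f) :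
    ∃ m, ∀ x v, v ∈ c m → f (v * x) = f x := by
  have key : ∀ x : N, ∃ l, ∀ v ∈ c l, f (v * x) = f x := by
    intro x
    have hop : IsOpen ((fun v => v * x) ⁻¹' (f ⁻¹' {f x})) :=
      (hlc {f x}).preimage (continuous_mul_right x)
    obtain ⟨l, hl⟩ := aux_small c hantitone hcompact hopen hsep hop (by simp)
    exact ⟨l, fun v hv => hl hv⟩
  choose mx hmx using key
  set U : N → Set N := fun x => (fun y => y * x⁻¹) ⁻¹' (c (mx x) : Set N) with hUdef
  have hUopen : ∀ x, IsOpen (U x) := fun x => (hopen _).preimage (continuous_mul_right _)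
  have hUmem : ∀ x, x ∈ U x := by
    intro x
    simp only [hUdef, Set.mem_preimage, mul_inv_cancel]
    exact (c (mx x)).one_mem
  obtain ⟨t, ht⟩ := hcs.elim_nhds_subcover U (fun x _ => (hUopen x).mem_nhds (hUmem x))
  refine ⟨((insert (0:ℤ) (t.image mx))).max' (by simp), fun x v hv => ?_⟩
  have hvmx : ∀ i ∈ t, v ∈ c (mx i) := by
    intro i hi
    refine hantitone _ _ (Finset.le_max' _ _ ?_) hv
    exact Finset.mem_insert_of_mem (Finset.mem_image_of_mem mx hi)
  by_cases hx : ∃ i ∈ t, x ∈ U i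
  · obtain ⟨i, hi, hxi⟩ := hx
    have hxi' : x * i⁻¹ ∈ c (mx i) := hxi
    have h1 : f x = f i := by
      have := hmx i _ hxi'
      rwa [inv_mul_cancel_right] at this
    have h2 : f (v * x) = f i := by
      have hm : v * (x * i⁻¹) ∈ c (mx i) := mul_mem (hvmx i hi) hxi'
      have := hmx i _ hm
      rwa [mul_assoc, inv_mul_cancel_right] at this
    rw [h2, h1]
  · push_neg at hx
    have hfx : f x = 0 := by
      by_contra h
      obtain ⟨i, hi, hxi⟩ := Set.mem_iUnion₂.1 (ht.2 (subset_tsupport f h))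
      exact hx i hi hxi
    have hfxv : f (v * x) = 0 := by
      by_contra h
      obtain ⟨i, hi, hxi⟩ := Set.mem_iUnion₂.1 (ht.2 (subset_tsupport f h))
      have hxi' : (v * x) * i⁻¹ ∈ (c (mx i) : Set N) := hxi
      have : x * i⁻¹ ∈ c (mx i) := by
        have := mul_mem (inv_mem (hvmx i hi)) hxi'
        rwa [show v⁻¹ * (v * x * i⁻¹) = x * i⁻¹ by group] at this
      exact hx i hi this
    rw [hfx, hfxv]

end Aux

/-- let B act on C_c^∞(N) via the twisted right-translation action coming
from the identification Φ of κ_ε with C_c^∞(N).  If V ⊆ C_c^∞(N) is a nonzero subspace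
stable under this B-action, then V contains the characteristic function 1_{N_k} for some
k ∈ ℤ, and consequently V = C_c^∞(N).  In particular the B-representation κ_ε is
irreducible.

The setting of U(2,1)(E/F) is axiomatized: N is the unipotent radical with its filtration
(N_k) by compact open pro-p subgroups, ι : N → B the inclusion, a = α ∈ B, and the
B-action satisfies ρ(u·αⁿ)·1_{N_k} = ε(α)⁻ⁿ·1_{N_{k-2n}·u⁻¹}. -/
theorem kappa_irreducible
    (p : ℕ) [Fact p.Prime] (K : Type*) [Field K] [CharP K p]
    (N : Type*) [Group N] [TopologicalSpace N] [IsTopologicalGroup N]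
    (c : ℤ → Subgroup N)
    (hantitone : ∀ k l : ℤ, k ≤ l → c l ≤ c k)
    (hcompact : ∀ k, IsCompact (c k : Set N))
    (hopen : ∀ k, IsOpen (c k : Set N))
    (hsep : ⋂ k : ℤ, (c k : Set N) = {1})
    (hexh : ⋃ k : ℤ, (c k : Set N) = Set.univ)
    (hprop : ∀ (k : ℤ) (U : Subgroup N), IsOpen (U : Set N) →
      ∃ n : ℕ, U.relIndex (c k) = p ^ n)
    (B : Type*) [Group B] (ι : N →* B) (a : B) (εa : Kˣ)
    (ρ : Representation K B (N → K))
    -- elements of N ⊆ B act by right translation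
    (htrans : ∀ (u : N) (f : N → K), ρ (ι u) f = fun g => f (g * u))
    -- the action of u·αⁿ on characteristic functions of the filtration subgroups
    (haction : ∀ (n k : ℤ) (u : N),
      ρ (ι u * a ^ n) (Set.indicator (c k : Set N) (fun _ => (1 : K))) =
        ((εa ^ (-n) : Kˣ) : K) •
          Set.indicator ((c (k - 2 * n) : Set N) * ({u⁻¹} : Set N)) (fun _ => (1 : K)))
    (V : Submodule K (N → K))
    (hVCc : ∀ f ∈ V, IsLocallyConstant f ∧ HasCompactSupport f)
    (hVstable : ∀ b : B, ∀ f ∈ V, ρ b f ∈ V)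
    (hVne : V ≠ ⊥) :
    (∃ k : ℤ, Set.indicator (c k : Set N) (fun _ => (1 : K)) ∈ V) ∧
      (V : Set (N → K)) = {f | IsLocallyConstant f ∧ HasCompactSupport f} := by
  classical
  haveI : NeZero p := ⟨(Fact.out : p.Prime).ne_zero⟩
  have hmemmul : ∀ (J : ℤ) (u z : N),
      z ∈ (c J : Set N) * ({u} : Set N) ↔ z * u⁻¹ ∈ c J := by
    intro J u z
    constructor
    · rintro ⟨x, hx, y, hy, rfl⟩
      rcases Set.mem_singleton_iff.1 hy with rfl
      rwa [mul_inv_cancel_right]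
    · intro h
      exact ⟨z * u⁻¹, h, u, rfl, by show z * u⁻¹ * u = z; group⟩
  obtain ⟨f, hfV, hfne⟩ := Submodule.ne_bot_iff V |>.mp hVne
  obtain ⟨hflc, hfcs⟩ := hVCc f hfV
  obtain ⟨l₀, hl₀⟩ := aux_unif_right c hantitone hcompact hopen hsep hflc hfcs
  obtain ⟨k₀, hk₀⟩ := aux_supp c hantitone hopen hexh hfcs
  set k : ℤ := min k₀ l₀ with hkdef
  set l : ℤ := max k₀ l₀ with hldef
  have hsuppf : ∀ x : N, f x ≠ 0 → x ∈ c k :=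
    fun x hx => hantitone k k₀ (min_le_left _ _) (hk₀ x hx)
  have hinvf : ∀ x v : N, v ∈ c l → f (x * v) = f x :=
    fun x v hv => hl₀ x v (hantitone l₀ l (le_max_right _ _) hv)
  -- translation operators
  set t : N → (N → K) := fun u => fun x => f (x * u) with htdef
  have htV : ∀ u : N, t u ∈ V := by
    intro u
    have h := hVstable (ι u) f hfV
    rwa [htrans u f] at h
  -- the ZMod p module structure on N → K
  have hps : ∀ x : N → K, p • x = 0 := by
    intro x
    funext y
    simp only [Pi.smul_apply, Pi.zero_apply, nsmul_eq_mul, CharP.cast_eq_zero, zero_mul]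
  letI : Module (ZMod p) (N → K) := @AddCommGroup.zmodModule p (N → K) _ hps
  have hzsmul : ∀ (b : ZMod p) (w : N → K), b • w = b.val • w := by
    intro b w
    have h1 : ((b.val : ℕ) : ZMod p) • w = b.val • w := Nat.cast_smul_eq_nsmul _ _ _
    rwa [ZMod.natCast_rightInverse b] at h1
  have hVz : ∀ (b : ZMod p) (w : N → K), w ∈ V → b • w ∈ V := by
    intro b w hw
    rw [hzsmul]
    exact nsmul_mem hw b.val
  -- the span of the translates of f
  set S₀ : Set (N → K) := t '' (c k : Set N) with hS₀def
  have hS₀fin : S₀.Finite := by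
    obtain ⟨T, hT⟩ := (hcompact k).elim_nhds_subcover
        (fun u => (fun y => u⁻¹ * y) ⁻¹' (c l : Set N))
        (fun u _ => ((hopen l).preimage (continuous_mul_left _)).mem_nhds
          (by simp only [Set.mem_preimage, inv_mul_cancel]; exact (c l).one_mem))
    refine Set.Finite.subset (T.finite_toSet.image t) ?_
    rintro s ⟨u, hu, rfl⟩
    obtain ⟨i, hi, hui⟩ := Set.mem_iUnion₂.1 (hT.2 hu)
    have hui' : i⁻¹ * u ∈ c l := hui
    refine ⟨i, hi, ?_⟩
    funext x
    show f (x * i) = f (x * u)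
    have h := hinvf (x * i) (i⁻¹ * u) hui'
    rw [show x * i * (i⁻¹ * u) = x * u by group] at h
    exact h.symm
  set W : Submodule (ZMod p) (N → K) := Submodule.span (ZMod p) S₀ with hWdef
  have hWV : ∀ w ∈ W, w ∈ V := by
    intro w hw
    refine Submodule.span_induction (p := fun w _ => w ∈ V) ?_ ?_ ?_ ?_ hw
    · rintro x ⟨u, -, rfl⟩
      exact htV u
    · exact V.zero_mem
    · intro x y hx hy ihx ihy
      exact V.add_mem ihx ihy
    · intro b x hx ih
      exact hVz b x ih
  have hWsupp : ∀ w ∈ W, ∀ x : N, w x ≠ 0 → x ∈ c k := by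
    intro w hw
    refine Submodule.span_induction
      (p := fun w _ => ∀ x : N, w x ≠ 0 → x ∈ c k) ?_ ?_ ?_ ?_ hw
    · rintro s ⟨u, hu, rfl⟩ x hx
      have h1 : x * u ∈ c k := hsuppf _ hx
      have h2 := mul_mem h1 (inv_mem hu)
      rwa [mul_inv_cancel_right] at h2
    · intro x hx; exact absurd rfl hx
    · intro x y hx hy ihx ihy z hz
      by_cases h : x z = 0
      · refine ihy z ?_
        intro h0
        apply hz
        show x z + y z = 0
        rw [h, h0, add_zero]
      · exact ihx z h
    · intro b x hx ih z hz
      refine ih z fun h => hz ?_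
      rw [hzsmul, Pi.smul_apply, h, smul_zero]
  have hWstable : ∀ (g : N), g ∈ c k → ∀ w ∈ W, (fun x => w (x * g)) ∈ W := by
    intro g hg w hw
    refine Submodule.span_induction
      (p := fun w _ => (fun x => w (x * g)) ∈ W) ?_ ?_ ?_ ?_ hw
    · rintro s ⟨u, hu, rfl⟩
      refine Submodule.subset_span ⟨g * u, mul_mem hg hu, ?_⟩
      funext x
      show f (x * (g * u)) = f (x * g * u)
      rw [mul_assoc]
    · exact W.zero_mem
    · intro x y hx hy ihx ihy
      have h : (fun z => (x + y) (z * g)) = (fun z => x (z * g)) + fun z => y (z * g) := rfl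
      rw [h]
      exact W.add_mem ihx ihy
    · intro b x hx ih
      have h : (fun z => (b • x) (z * g)) = b • fun z => x (z * g) := by
        funext z
        rw [hzsmul, hzsmul]
        rfl
      rw [h]
      exact W.smul_mem b ih
  -- the action of ↥(c k) on ↥W by right translation
  letI : SMul ↥(c k) ↥W := ⟨fun g w => ⟨fun x => (w : N → K) (x * (g : N)),
    hWstable g g.2 w w.2⟩⟩
  letI : MulAction ↥(c k) ↥W :=
    { one_smul := fun w => Subtype.ext (funext fun x => by
        show (w : N → K) (x * ((1 : ↥(c k)) : N)) = (w : N → K) x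
        rw [OneMemClass.coe_one, mul_one])
      mul_smul := fun g h w => Subtype.ext (funext fun x => by
        show (w : N → K) (x * ((g * h : ↥(c k)) : N)) = (w : N → K) (x * ↑g * ↑h)
        rw [Subgroup.coe_mul, mul_assoc]) }
  haveI : Module.Finite (ZMod p) ↥W := Module.Finite.span_of_finite (ZMod p) hS₀fin
  haveI : Finite ↥W := Module.finite_of_finite (ZMod p)
  have hfW : f ∈ W := Submodule.subset_span ⟨1, (c k).one_mem, by
    funext x; show f (x * 1) = f x; rw [mul_one]⟩
  haveI : Nontrivial ↥W := ⟨⟨⟨f, hfW⟩, 0, fun h => hfne (by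
    simpa using congrArg Subtype.val h)⟩⟩
  -- every orbit has p-power cardinality
  have horb : ∀ w : ↥W, ∃ n : ℕ, Nat.card (MulAction.orbit ↥(c k) w) = p ^ n := by
    intro w
    obtain ⟨hwlc, hwcs⟩ := hVCc (w : N → K) (hWV _ w.2)
    obtain ⟨lw, hlw⟩ := aux_unif_right c hantitone hcompact hopen hsep hwlc hwcs
    set H : Subgroup N := (MulAction.stabilizer ↥(c k) w).map (c k).subtype with hHdef
    have hle : c (max lw k) ≤ H := by
      intro v hv
      have hvk : v ∈ c k := hantitone k (max lw k) (le_max_right _ _) hv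
      have hvl : v ∈ c lw := hantitone lw (max lw k) (le_max_left _ _) hv
      refine Subgroup.mem_map.2 ⟨⟨v, hvk⟩, MulAction.mem_stabilizer_iff.2 ?_, rfl⟩
      refine Subtype.ext (funext fun x => ?_)
      show (w : N → K) (x * v) = (w : N → K) x
      exact hlw x v hvl
    have hHopen : IsOpen (H : Set N) := Subgroup.isOpen_mono hle (hopen (max lw k))
    obtain ⟨n, hn⟩ := hprop k H hHopen
    refine ⟨n, ?_⟩
    have hsub : H.subgroupOf (c k) = MulAction.stabilizer ↥(c k) w :=
      Subgroup.comap_map_eq_self_of_injective (c k).subtype_injective _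
    have hidx : (MulAction.stabilizer ↥(c k) w).index = p ^ n := by
      rw [← hsub]
      exact hn
    rw [Nat.card_congr (MulAction.orbitEquivQuotientStabilizer ↥(c k) w),
      ← Subgroup.index_eq_card, hidx]
  -- p divides the cardinality of W
  have hpdvdW : p ∣ Nat.card ↥W := by
    haveI := Fintype.ofFinite ↥W
    have hgt : 1 < Fintype.card ↥W := Fintype.one_lt_card
    rw [Module.card_eq_pow_finrank (K := ZMod p) (V := ↥W), ZMod.card] at hgt
    rw [Nat.card_eq_fintype_card, Module.card_eq_pow_finrank (K := ZMod p) (V := ↥W), ZMod.card]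
    refine dvd_pow_self p fun h0 => ?_
    rw [h0, pow_zero] at hgt
    exact lt_irrefl 1 hgt
  have hcong := aux_cnt (p := p) (G := ↥(c k)) (α := ↥W) horb
  have h0fix : (0 : ↥W) ∈ MulAction.fixedPoints ↥(c k) ↥W := by
    intro g
    exact Subtype.ext (funext fun x => rfl)
  have hpfix : p ∣ Nat.card (MulAction.fixedPoints ↥(c k) ↥W) := by
    have h1 : Nat.card ↥W ≡ 0 [MOD p] := (Nat.modEq_zero_iff_dvd).2 hpdvdW
    exact (Nat.modEq_zero_iff_dvd).1 (hcong.symm.trans h1)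
  haveI : Finite (MulAction.fixedPoints ↥(c k) ↥W) := Subtype.finite
  have hfixpos : 0 < Nat.card (MulAction.fixedPoints ↥(c k) ↥W) :=
    Nat.card_pos_iff.2 ⟨⟨⟨0, h0fix⟩⟩, inferInstance⟩
  have h2 : 1 < Nat.card (MulAction.fixedPoints ↥(c k) ↥W) :=
    lt_of_lt_of_le (Fact.out : p.Prime).one_lt (Nat.le_of_dvd hfixpos hpfix)
  haveI : Nontrivial ↥(MulAction.fixedPoints ↥(c k) ↥W) :=
    Finite.one_lt_card_iff_nontrivial.1 h2
  obtain ⟨w', hw'⟩ := exists_ne (⟨0, h0fix⟩ : MulAction.fixedPoints ↥(c k) ↥W)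
  set wfun : N → K := ((w' : ↥W) : N → K) with hwfundef
  have hwW : wfun ∈ W := (w' : ↥W).2
  have hwne : wfun ≠ 0 := by
    intro h
    exact hw' (Subtype.ext (Subtype.ext h))
  have hwfix : ∀ v : N, v ∈ c k → ∀ x, wfun (x * v) = wfun x := by
    intro v hv x
    have h := w'.2 ⟨v, hv⟩
    exact congrFun (congrArg (Subtype.val : ↥W → (N → K)) h) x
  have hwV : wfun ∈ V := hWV _ hwW
  have hwsupp := hWsupp _ hwW
  obtain ⟨x0, hx0⟩ : ∃ x, wfun x ≠ 0 := by
    by_contra h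
    push_neg at h
    exact hwne (funext h)
  have hx0k : x0 ∈ c k := hwsupp x0 hx0
  have hmu : wfun 1 ≠ 0 := by
    have h := hwfix x0 hx0k 1
    rw [one_mul] at h
    rw [← h]
    exact hx0
  have hindV : Set.indicator (c k : Set N) (fun _ => (1:K)) ∈ V := by
    have heq : Set.indicator (c k : Set N) (fun _ => (1:K)) = (wfun 1)⁻¹ • wfun := by
      funext x
      by_cases hx : x ∈ (c k : Set N)
      · rw [Set.indicator_of_mem hx]
        have h1 : wfun x = wfun 1 := by
          have h := hwfix x hx 1
          rwa [one_mul] at h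
        rw [Pi.smul_apply, h1, smul_eq_mul, inv_mul_cancel₀ hmu]
      · rw [Set.indicator_of_notMem hx, Pi.smul_apply]
        have h1 : wfun x = 0 := by
          by_contra h
          exact hx (hwsupp x h)
        rw [h1, smul_zero]
    rw [heq]
    exact V.smul_mem _ hwV
  refine ⟨⟨k, hindV⟩, ?_⟩
  -- Part 2
  have hind : ∀ (n : ℤ) (u : N),
      Set.indicator ((c (k - 2*n) : Set N) * ({u} : Set N)) (fun _ => (1:K)) ∈ V := by
    intro n u
    have h1 := hVstable (ι u⁻¹ * a ^ n) _ hindV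
    rw [haction n k u⁻¹, inv_inv] at h1
    have h2 := V.smul_mem (((εa ^ (-n))⁻¹ : Kˣ) : K) h1
    rwa [smul_smul, Units.inv_mul, one_smul] at h2
  apply Set.Subset.antisymm
  · intro g hg
    exact hVCc g hg
  · intro g hg
    obtain ⟨hglc, hgcs⟩ := hg
    obtain ⟨m, hm⟩ := aux_unif_left c hantitone hcompact hopen hsep hglc hgcs
    set n : ℤ := -(((m - k).natAbs : ℤ)) with hndef
    set J : ℤ := k - 2 * n with hJdef
    have hJm : m ≤ J := by
      have h1 : (m - k) ≤ ((m - k).natAbs : ℤ) := Int.le_natAbs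
      have h2 : (0:ℤ) ≤ ((m - k).natAbs : ℤ) := Int.natCast_nonneg _
      omega
    have hindJ : ∀ u : N, Set.indicator ((c J : Set N) * ({u} : Set N)) (fun _ => (1:K)) ∈ V :=
      fun u => hind n u
    have hcJm : c J ≤ c m := hantitone m J hJm
    obtain ⟨T, hT⟩ := hgcs.elim_nhds_subcover
        (fun u => (fun y => y * u⁻¹) ⁻¹' (c J : Set N))
        (fun u _ => ((hopen J).preimage (continuous_mul_right _)).mem_nhds
          (by simp only [Set.mem_preimage, mul_inv_cancel]; exact (c J).one_mem))
    have main : ∀ (T' : Finset N) (g' : N → K), (∀ x v, v ∈ c J → g' (v * x) = g' x) →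
        (∀ x, g' x ≠ 0 → ∃ i ∈ T', x * i⁻¹ ∈ c J) → g' ∈ V := by
      intro T'
      induction T' using Finset.induction_on with
      | empty =>
        intro g' _ hsupp
        have h : g' = 0 := by
          funext x
          by_contra h
          obtain ⟨i, hi, _⟩ := hsupp x h
          exact absurd hi (Finset.notMem_empty i)
        rw [h]
        exact V.zero_mem
      | @insert i T' hiT' IH =>
        intro g' hinv hsupp
        set ind : N → K := Set.indicator ((c J : Set N) * ({i} : Set N)) (fun _ => (1:K))
          with hinddef
        have hindmem : ∀ x, x ∈ (c J : Set N) * ({i} : Set N) ↔ x * i⁻¹ ∈ c J :=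
          fun x => hmemmul J i x
        have hindinv : ∀ x v, v ∈ c J → ind (v * x) = ind x := by
          intro x v hv
          by_cases hx : x ∈ (c J : Set N) * ({i} : Set N)
          · have hx' := (hindmem x).1 hx
            have hvx : v * x ∈ (c J : Set N) * ({i} : Set N) := by
              refine (hindmem _).2 ?_
              rw [show v * x * i⁻¹ = v * (x * i⁻¹) by group]
              exact mul_mem hv hx'
            rw [hinddef, Set.indicator_of_mem hvx, Set.indicator_of_mem hx]
          · have hvx : v * x ∉ (c J : Set N) * ({i} : Set N) := by
              intro hc
              apply hx
              refine (hindmem x).2 ?_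
              have h1 := (hindmem _).1 hc
              have h2 := mul_mem (inv_mem hv) h1
              rwa [show v⁻¹ * (v * x * i⁻¹) = x * i⁻¹ by group] at h2
            rw [hinddef, Set.indicator_of_notMem hvx, Set.indicator_of_notMem hx]
        set g'' : N → K := g' - g' i • ind with hg''def
        have hg''inv : ∀ x v, v ∈ c J → g'' (v * x) = g'' x := by
          intro x v hv
          show g' (v * x) - g' i • ind (v * x) = g' x - g' i • ind x
          rw [hinv x v hv, hindinv x v hv]
        have hg''supp : ∀ x, g'' x ≠ 0 → ∃ i' ∈ T', x * i'⁻¹ ∈ c J := by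
          intro x hx
          by_cases hxi : x * i⁻¹ ∈ c J
          · exfalso
            apply hx
            show g' x - g' i • ind x = 0
            have h1 : g' x = g' i := by
              have h := hinv i (x * i⁻¹) hxi
              rwa [inv_mul_cancel_right] at h
            have h2 : ind x = 1 := Set.indicator_of_mem ((hindmem x).2 hxi) _
            rw [h1, h2, smul_eq_mul, mul_one, sub_self]
          · have h2 : ind x = 0 :=
              Set.indicator_of_notMem (fun hc => hxi ((hindmem x).1 hc)) _
            have h3 : g' x ≠ 0 := by
              intro h
              apply hx
              show g' x - g' i • ind x = 0
              rw [h, h2, smul_zero, sub_zero]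
            obtain ⟨i', hi', hxi'⟩ := hsupp x h3
            rcases Finset.mem_insert.1 hi' with h | hmem
            · exact absurd (h ▸ hxi') hxi
            · exact ⟨i', hmem, hxi'⟩
        have hg''V : g'' ∈ V := IH g'' hg''inv hg''supp
        have heq : g' = g'' + g' i • ind := by
          rw [hg''def, sub_add_cancel]
        rw [heq]
        exact V.add_mem hg''V (V.smul_mem _ (hindJ i))
    refine main T g (fun x v hv => hm x v (hcJm hv)) (fun x hx => ?_)
    obtain ⟨i, hi, hxi⟩ := Set.mem_iUnion₂.1 (hT.2 (subset_tsupport g hx))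
    exact ⟨i, hi, hxi⟩
end

section
/- Let π be a smooth representation of B over 𝔽̄_p, and suppose v ∈ π is fixed by α (acting through a character: α·v = c·v with c ≠ 0) and v is fixed by some N'_{m+2k} for k ≥ 0. If additionally α N'_{m+2k-2} α⁻¹ = N'_{m+2k} and v = c⁻¹ α·v, then v is fixed by N'_{m+2k-2}; iterating, v is fixed by the full group N' = ⋃_j N'_{m-2j}. Consequently, if ε is a smooth character of B with Hom_B(ε, π) ≠ 0 for π a smooth G-representation, then ε extends to a character of G = ⟨B, N'⟩ and Hom_B(ε,π) ≅ Hom_G(ε,π); in particular if ε is not of the form η ∘ det then Hom_B(ε, π) = 0. -/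
/-!
Conjugation by an element `α` of which `v` is an eigenvector preserves the stabilizer of `v`.
Since `α` shifts the filtration, `α N'_k α⁻¹ = N'_{k+2}`, a vector fixed by `N'_{k+2}` is fixed
by `N'_k`, and descending this way it is fixed by every `N'_k`, hence by `N'`. A vector on which
`B` acts through `ε` is then an eigenvector of every element of `B ∪ N'`, which generates `G`;
so `G` stabilizes the line through it, and the eigenvalues form a character of `G` extending `ε`.
-/

namespace Representation

variable {K G V : Type*} [Field K] [Group G] [AddCommGroup V] [Module K V]
  (ρ : Representation K G V)

def stabilizer (v : V) : Subgroup G where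
  carrier := {g | ρ g v = v}
  one_mem' := by simp
  mul_mem' {a b} (ha : ρ a v = v) (hb : ρ b v = v) := by
    show ρ (a * b) v = v
    rw [map_mul, Module.End.mul_apply, hb, ha]
  inv_mem' {a} ha := (inv_apply_eq_iff ρ).2 ha.symm

def lineStabilizer (v : V) : Subgroup G where
  carrier := {g | ∃ c : Kˣ, ρ g v = (c : K) • v}
  one_mem' := ⟨1, by simp⟩
  mul_mem' := by
    rintro a b ⟨ca, ha⟩ ⟨cb, hb⟩
    refine ⟨ca * cb, ?_⟩
    rw [map_mul, Module.End.mul_apply, hb, map_smul, ha, smul_smul, Units.val_mul, mul_comm]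
  inv_mem' := by
    rintro a ⟨c, hc⟩
    exact ⟨c⁻¹, (inv_apply_eq_iff ρ).2 <| by rw [map_smul, hc, smul_smul]; simp⟩

variable {ρ}

lemma apply_inv_eq_of_apply_eq {h : G} {v : V} {c : Kˣ} (hv : ρ h v = (c : K) • v) :
    ρ h⁻¹ v = ((c⁻¹ : Kˣ) : K) • v :=
  (inv_apply_eq_iff ρ).2 <| by rw [map_smul, hv, smul_smul]; simp

lemma mem_stabilizer_of_conj_mem {h g : G} {v : V} {c : Kˣ} (hv : ρ h v = (c : K) • v)
    (hg : h * g * h⁻¹ ∈ stabilizer ρ v) : g ∈ stabilizer ρ v := by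
  have hg' : ρ (h * g * h⁻¹) v = v := hg
  calc ρ g v = ρ h⁻¹ (ρ (h * g * h⁻¹) (ρ h v)) := by
        simp only [← Module.End.mul_apply, ← map_mul]; group
    _ = v := by
        rw [hv, map_smul, hg', map_smul, apply_inv_eq_of_apply_eq hv, smul_smul]; simp

lemma filtration_le_stabilizer {Nf : ℤ → Subgroup G} (hanti : Antitone Nf) {α : G}
    (hconj : ∀ k, ∀ g ∈ Nf k, α * g * α⁻¹ ∈ Nf (k + 2)) {v : V} {c : Kˣ}
    (hv : ρ α v = (c : K) • v) {j : ℤ} (hj : Nf j ≤ stabilizer ρ v) (k : ℤ) :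
    Nf k ≤ stabilizer ρ v := by
  have step : ∀ n : ℕ, Nf (j - 2 * n) ≤ stabilizer ρ v := by
    intro n
    induction n with
    | zero => simpa using hj
    | succ n ih =>
      intro g hg
      refine mem_stabilizer_of_conj_mem hv (ih ?_)
      convert hconj _ g hg using 2
      push_cast; ring
  exact (hanti (by omega : j - 2 * ((j - k).toNat : ℕ) ≤ k)).trans (step _)

lemma eq_of_smul_eq_smul_of_ne_zero {v : V} (hv : v ≠ 0) {a b : Kˣ}
    (h : (a : K) • v = (b : K) • v) : a = b :=
  Units.ext (smul_left_injective K hv h)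

lemma exists_character_of_lineStabilizer_eq_top {v : V} (hv : v ≠ 0)
    (htop : lineStabilizer ρ v = ⊤) : ∃ χ : G →* Kˣ, ∀ g, ρ g v = (χ g : K) • v := by
  have hall : ∀ g : G, ∃ c : Kˣ, ρ g v = (c : K) • v := fun g => htop.ge (Subgroup.mem_top g)
  choose χ hχ using hall
  refine ⟨MonoidHom.mk' χ fun a b => eq_of_smul_eq_smul_of_ne_zero hv ?_, hχ⟩
  rw [← hχ, map_mul, Module.End.mul_apply, hχ, map_smul, hχ, smul_smul, Units.val_mul, mul_comm]

end Representation

open Representation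

/-- in the setting of G = U(2,1)(E/F) with Borel B, lower unipotent
subgroup N' filtered by subgroups N'_k with α·N'_k·α⁻¹ = N'_{k+2}:
(a) if v is an eigenvector of α with nonzero eigenvalue and v is fixed by some N'_j,
then v is fixed by all of N';
(b) consequently, if ε is a smooth character of B occurring in a smooth representation π
of G, then ε extends to a character of G = ⟨B, N'⟩ and any vector on which B acts by ε
is acted on by G through the extended character (whence Hom_B(ε,π) ≅ Hom_G(ε,π));
(c) in particular, if ε does not extend to a character of G (i.e. ε is not of the form
η ∘ det), then Hom_B(ε, π) = 0. -/
theorem extension_of_character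
    (K : Type*) [Field K]
    (G : Type*) [Group G] (B N' : Subgroup G)
    (Nf : ℤ → Subgroup G)
    (hantitone : ∀ k l : ℤ, k ≤ l → Nf l ≤ Nf k)
    (hN' : ∀ g : G, g ∈ N' ↔ ∃ k : ℤ, g ∈ Nf k)
    (α : G) (hαB : α ∈ B)
    (hconj : ∀ (k : ℤ) (g : G), g ∈ Nf k ↔ α * g * α⁻¹ ∈ Nf (k + 2))
    (hgen : Subgroup.closure ((B : Set G) ∪ (N' : Set G)) = ⊤)
    (V : Type*) [AddCommGroup V] [Module K V]
    (ρ : Representation K G V)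
    -- smoothness: every vector is fixed by some filtration subgroup N'_j
    (hsmooth : ∀ w : V, ∃ j : ℤ, ∀ g ∈ Nf j, ρ g w = w)
    (ε : B →* Kˣ) :
    -- (a)
    (∀ (v : V) (c : Kˣ), ρ α v = (c : K) • v → (∃ j : ℤ, ∀ g ∈ Nf j, ρ g v = v) →
      ∀ g ∈ N', ρ g v = v) ∧
    -- (b)
    (∀ v : V, v ≠ 0 → (∀ b : B, ρ (b : G) v = ((ε b : Kˣ) : K) • v) →
      ∃ εG : G →* Kˣ, (∀ b : B, εG (b : G) = ε b) ∧
        ∀ g : G, ρ g v = ((εG g : Kˣ) : K) • v) ∧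
    -- (c)
    ((¬ ∃ εG : G →* Kˣ, ∀ b : B, εG (b : G) = ε b) →
      ∀ v : V, (∀ b : B, ρ (b : G) v = ((ε b : Kˣ) : K) • v) → v = 0) := by
  have partA : ∀ (v : V) (c : Kˣ), ρ α v = (c : K) • v → (∃ j : ℤ, ∀ g ∈ Nf j, ρ g v = v) →
      ∀ g ∈ N', ρ g v = v := by
    rintro v c hv ⟨j, hj⟩ g hg
    obtain ⟨k, hk⟩ := (hN' g).1 hg
    exact filtration_le_stabilizer hantitone (fun k g => (hconj k g).1) hv hj k hk
  have partB : ∀ v : V, v ≠ 0 → (∀ b : B, ρ (b : G) v = ((ε b : Kˣ) : K) • v) →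
      ∃ εG : G →* Kˣ, (∀ b : B, εG (b : G) = ε b) ∧ ∀ g : G, ρ g v = ((εG g : Kˣ) : K) • v := by
    intro v hv hB
    have hN'fix := partA v _ (hB ⟨α, hαB⟩) (hsmooth v)
    have htop : lineStabilizer ρ v = ⊤ := by
      refine top_le_iff.1 (hgen ▸ (Subgroup.closure_le _).2 ?_)
      rintro g (hg | hg)
      · exact ⟨ε ⟨g, hg⟩, hB ⟨g, hg⟩⟩
      · exact ⟨1, by simpa using hN'fix g hg⟩
    obtain ⟨χ, hχ⟩ := exists_character_of_lineStabilizer_eq_top hv htop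
    exact ⟨χ, fun b => eq_of_smul_eq_smul_of_ne_zero hv ((hχ b).symm.trans (hB b)), hχ⟩
  refine ⟨partA, partB, fun hne v hB => ?_⟩
  by_contra hv
  obtain ⟨χ, hχB, -⟩ := partB v hv hB
  exact hne ⟨χ, hχB⟩
end

section
/- Let I_1 be a pro-p group with an Iwahori-type decomposition I_1 = (I_1 ∩ B)·N'_m. If π is a smooth representation of G and w ∈ π is fixed by N'_m, then the I_1-subrepresentation generated by w equals the (I_1 ∩ B)-subrepresentation generated by w; in particular (since I_1 is pro-p and the latter space is nonzero) the span ⟨B·w⟩ contains a nonzero I_1-fixed vector. -/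
section Aux

variable {K : Type*} [Field K] {G : Type*} [Group G]
  {V : Type*} [AddCommGroup V] [Module K V]

/-- The stabilizer of a vector under a representation, as a subgroup. -/
def repStab (ρ : Representation K G V) (v : V) : Subgroup G where
  carrier := {g : G | ρ g v = v}
  one_mem' := by simp
  mul_mem' := by
    intro a b ha hb
    simp only [Set.mem_setOf_eq] at *
    rw [map_mul, Module.End.mul_apply, hb, ha]
  inv_mem' := by
    intro a ha
    simp only [Set.mem_setOf_eq] at *
    conv_lhs => rw [← ha]
    rw [← Module.End.mul_apply (ρ a⁻¹), ← map_mul, inv_mul_cancel, map_one,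
      Module.End.one_apply]

lemma repStab_coe (ρ : Representation K G V) (v : V) :
    (repStab ρ v : Set G) = {g : G | ρ g v = v} := rfl

end Aux

/-- let I₁ be a pro-p (compact open) subgroup of G with an Iwahori-type
decomposition I₁ = (I₁ ∩ B)·N'_m.  If π is a smooth representation of G over a field of
characteristic p and w ∈ π is a nonzero vector fixed by N'_m, then the
I₁-subrepresentation generated by w equals the (I₁ ∩ B)-subrepresentation generated by
w; in particular the B-span ⟨B·w⟩ contains a nonzero I₁-fixed vector. -/
theorem span_I1_eq_span_I1_inter_B
    (p : ℕ) [Fact p.Prime]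
    (K : Type*) [Field K] [CharP K p]
    (G : Type*) [Group G] [TopologicalSpace G] [IsTopologicalGroup G]
    (I₁ B N'm : Subgroup G)
    (hN'mI₁ : N'm ≤ I₁)
    -- Iwahori-type decomposition I₁ = (I₁ ∩ B)·N'_m
    (hdecomp : ∀ g ∈ I₁, ∃ b ∈ I₁ ⊓ B, ∃ u ∈ N'm, g = b * u)
    -- I₁ is compact, open and pro-p
    (hcompact : IsCompact (I₁ : Set G)) (hopen : IsOpen (I₁ : Set G))
    (hprop : ∀ U : Subgroup G, IsOpen (U : Set G) → ∃ n : ℕ, U.relIndex I₁ = p ^ n)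
    (V : Type*) [AddCommGroup V] [Module K V]
    (ρ : Representation K G V)
    -- smoothness of π
    (hsmooth : ∀ v : V, IsOpen {g : G | ρ g v = v})
    (w : V) (hw : w ≠ 0) (hwfix : ∀ u ∈ N'm, ρ u w = w) :
    Submodule.span K ((fun g => ρ g w) '' (I₁ : Set G)) =
      Submodule.span K ((fun g => ρ g w) '' ((I₁ ⊓ B : Subgroup G) : Set G)) ∧
    ∃ v : V, v ≠ 0 ∧ v ∈ Submodule.span K ((fun g => ρ g w) '' (B : Set G)) ∧
      ∀ g ∈ I₁, ρ g v = v := by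
  classical
  have hp : p.Prime := Fact.out
  haveI : NeZero p := ⟨hp.ne_zero⟩
  -- V is a ZMod p module
  haveI : Module (ZMod p) V := AddCommGroup.zmodModule (by
    intro x
    rw [← Nat.cast_smul_eq_nsmul K, CharP.cast_eq_zero, zero_smul])
  set S : Set V := (fun g => ρ g w) '' (I₁ : Set G) with hSdef
  -- every vector in the I₁-orbit is in the (I₁ ⊓ B)-orbit
  have hS1 : ∀ g ∈ I₁, ∃ b ∈ I₁ ⊓ B, ρ g w = ρ b w := by
    intro g hg
    obtain ⟨b, hb, u, hu, rfl⟩ := hdecomp g hg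
    refine ⟨b, hb, ?_⟩
    rw [map_mul, Module.End.mul_apply, hwfix u hu]
  -- part 1 : the two spans agree
  have part1 : Submodule.span K ((fun g => ρ g w) '' (I₁ : Set G)) =
      Submodule.span K ((fun g => ρ g w) '' ((I₁ ⊓ B : Subgroup G) : Set G)) := by
    apply le_antisymm
    · rw [Submodule.span_le]
      rintro _ ⟨g, hg, rfl⟩
      obtain ⟨b, hb, heq⟩ := hS1 g hg
      exact Submodule.subset_span ⟨b, hb, heq.symm⟩
    · exact Submodule.span_mono (Set.image_mono fun x hx => hx.1)
  -- S is I₁-stable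
  have hSstable : ∀ g ∈ I₁, ∀ s ∈ S, ρ g s ∈ S := by
    rintro g hg _ ⟨x, hx, rfl⟩
    refine ⟨g * x, mul_mem hg hx, ?_⟩
    show ρ (g * x) w = ρ g (ρ x w)
    rw [map_mul, Module.End.mul_apply]
  -- S is finite
  have hfin : S.Finite := by
    obtain ⟨n, hn⟩ := hprop (repStab ρ w) (by rw [repStab_coe]; exact hsmooth w)
    have hne : ((repStab ρ w).subgroupOf I₁).index ≠ 0 := by
      rw [← Subgroup.relIndex, hn]; exact pow_ne_zero n hp.ne_zero
    haveI : Finite (I₁ ⧸ (repStab ρ w).subgroupOf I₁) := by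
      rw [Subgroup.index] at hne
      exact Nat.finite_of_card_ne_zero hne
    set φ : (I₁ ⧸ (repStab ρ w).subgroupOf I₁) → V :=
      Quotient.lift (fun g : I₁ => ρ (g : G) w) (by
        intro a b hab
        have hab' := QuotientGroup.leftRel_apply.mp hab
        have : ρ ((a : G)⁻¹ * b) w = w := hab'
        have h2 : ρ (a : G) (ρ ((a : G)⁻¹ * (b : G)) w) = ρ (b : G) w := by
          rw [← Module.End.mul_apply, ← map_mul, mul_inv_cancel_left]
        simp only [this] at h2
        exact h2) with hφ
    apply Set.Finite.subset (Set.finite_range φ)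
    rintro _ ⟨g, hg, rfl⟩
    exact ⟨QuotientGroup.mk (⟨g, hg⟩ : I₁), rfl⟩
  -- the ZMod p span of S
  haveI : Module.Finite (ZMod p) (Submodule.span (ZMod p) S) :=
    Module.Finite.span_of_finite (ZMod p) hfin
  haveI hWfin' : Finite (Submodule.span (ZMod p) S) := Module.finite_of_finite (ZMod p)
  set W : Submodule (ZMod p) V := Submodule.span (ZMod p) S with hWdef
  haveI : Finite W := hWfin'
  have hwS : w ∈ S := ⟨1, one_mem I₁, by
    show ρ (1 : G) w = w
    rw [map_one, Module.End.one_apply]⟩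
  have hwW : w ∈ W := Submodule.subset_span hwS
  -- the K-span of the B-orbit contains W
  have hWK : (W : Set V) ⊆
      (Submodule.span K ((fun g => ρ g w) '' (B : Set G)) : Set V) := by
    intro v hv
    induction hv using Submodule.span_induction with
    | mem s hs =>
      obtain ⟨g, hg, rfl⟩ := hs
      obtain ⟨b, hb, heq⟩ := hS1 g hg
      exact Submodule.subset_span ⟨b, hb.2, heq.symm⟩
    | zero => exact Submodule.zero_mem _
    | add x y _ _ hx hy => exact Submodule.add_mem _ hx hy
    | smul c x _ hx => exact ZMod.smul_mem hx c
  -- I₁ preserves W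
  have hρW : ∀ g ∈ I₁, ∀ v ∈ W, ρ g v ∈ W := by
    intro g hg v hv
    induction hv using Submodule.span_induction with
    | mem s hs => exact Submodule.subset_span (hSstable g hg s hs)
    | zero => rw [map_zero]; exact Submodule.zero_mem _
    | add x y _ _ hx hy => rw [map_add]; exact Submodule.add_mem _ hx hy
    | smul c x _ hx =>
      rw [ZMod.map_smul (ρ g) c x]
      exact Submodule.smul_mem _ _ hx
  have hρinj : ∀ (g : G) (x : V), ρ g x = 0 → x = 0 := by
    intro g x hx
    have : ρ g⁻¹ (ρ g x) = x := by
      rw [← Module.End.mul_apply, ← map_mul, inv_mul_cancel, map_one,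
        Module.End.one_apply]
    rw [hx, map_zero] at this
    exact this.symm
  -- the finite set Ω of nonzero vectors of W
  set Ω := {v : W // v ≠ 0} with hΩdef
  -- the permutation of Ω attached to an element of I₁
  have hF : ∀ g ∈ I₁, ∀ v : Ω, ρ g ((v : W) : V) ∈ W ∧ ρ g ((v : W) : V) ≠ 0 := by
    intro g hg v
    refine ⟨hρW g hg _ (v : W).2, fun h => v.2 ?_⟩
    have : ((v : W) : V) = 0 := hρinj g _ h
    exact Subtype.ext this
  set F : ∀ g ∈ I₁, Ω → Ω := fun g hg v =>
    ⟨⟨ρ g ((v : W) : V), (hF g hg v).1⟩, by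
      intro h
      exact (hF g hg v).2 (congrArg Subtype.val h)⟩ with hFdef
  have hFcomp : ∀ (g₁ : G) (h₁ : g₁ ∈ I₁) (g₂ : G) (h₂ : g₂ ∈ I₁) (v : Ω),
      F g₁ h₁ (F g₂ h₂ v) = F (g₁ * g₂) (mul_mem h₁ h₂) v := by
    intro g₁ h₁ g₂ h₂ v
    apply Subtype.ext; apply Subtype.ext
    show ρ g₁ (ρ g₂ _) = ρ (g₁ * g₂) _
    rw [map_mul, Module.End.mul_apply]
  have hFext : ∀ (g₁ g₂ : G), g₁ = g₂ → ∀ (h₁ : g₁ ∈ I₁) (h₂ : g₂ ∈ I₁) (v : Ω),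
      F g₁ h₁ v = F g₂ h₂ v := by
    rintro g₁ _ rfl h₁ h₂ v; rfl
  have hFone : ∀ (v : Ω), F 1 (one_mem I₁) v = v := by
    intro v
    apply Subtype.ext; apply Subtype.ext
    show ρ 1 _ = _
    rw [map_one, Module.End.one_apply]
  -- the homomorphism from I₁ to permutations of Ω
  set f : I₁ →* Equiv.Perm Ω :=
    { toFun := fun g =>
        { toFun := F (g : G) g.2
          invFun := F ((g : G)⁻¹) (inv_mem g.2)
          left_inv := fun v =>
            (hFcomp _ (inv_mem g.2) _ g.2 v).trans
              ((hFext _ 1 (inv_mul_cancel _) (mul_mem (inv_mem g.2) g.2) (one_mem I₁) v).trans (hFone v))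
          right_inv := fun v =>
            (hFcomp _ g.2 _ (inv_mem g.2) v).trans
              ((hFext _ 1 (mul_inv_cancel _) (mul_mem g.2 (inv_mem g.2)) (one_mem I₁) v).trans (hFone v)) }
      map_one' := by
        apply Equiv.ext
        intro v
        exact hFone v
      map_mul' := by
        intro a b
        apply Equiv.ext
        intro v
        exact (hFcomp (a : G) a.2 (b : G) b.2 v).symm } with hfdef
  have hfapply : ∀ (g : I₁) (v : Ω), f g v = F (g : G) g.2 v := fun _ _ => rfl
  -- the pointwise stabilizer of S is open with p-power relindex, and is
  -- contained in the kernel of f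
  set U : Subgroup G := ⨅ s ∈ hfin.toFinset, repStab ρ s with hUdef
  have hUopen : IsOpen (U : Set G) := by
    rw [hUdef]
    have : ((⨅ s ∈ hfin.toFinset, repStab ρ s : Subgroup G) : Set G) =
        ⋂ s ∈ hfin.toFinset, (repStab ρ s : Set G) := by
      simp [Subgroup.coe_iInf]
    rw [this]
    exact isOpen_biInter_finset fun s _ => by rw [repStab_coe]; exact hsmooth s
  have hUker : U.subgroupOf I₁ ≤ f.ker := by
    intro g hg
    have hgS : ∀ s ∈ S, ρ (g : G) s = s := by
      intro s hs
      have := hg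
      rw [Subgroup.mem_subgroupOf, hUdef, Subgroup.mem_iInf] at this
      have h2 := this s
      rw [Subgroup.mem_iInf] at h2
      exact h2 (hfin.mem_toFinset.mpr hs)
    have hgW : ∀ v ∈ W, ρ (g : G) v = v := by
      intro v hv
      induction hv using Submodule.span_induction with
      | mem s hs => exact hgS s hs
      | zero => rw [map_zero]
      | add x y _ _ hx hy => rw [map_add, hx, hy]
      | smul c x _ hx => rw [ZMod.map_smul (ρ (g : G)) c x, hx]
    rw [MonoidHom.mem_ker]
    apply Equiv.ext
    intro v
    rw [hfapply]
    apply Subtype.ext; apply Subtype.ext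
    exact hgW _ (v : W).2
  -- f.range is a p-group
  obtain ⟨n, hn⟩ := hprop U hUopen
  have hdvd : Nat.card f.range ∣ p ^ n := by
    rw [← Subgroup.index_ker, ← hn, Subgroup.relIndex]
    exact Subgroup.index_dvd_of_le hUker
  obtain ⟨m, _, hm⟩ := (Nat.dvd_prime_pow hp).mp hdvd
  have hPG : IsPGroup p f.range := IsPGroup.of_card hm
  -- Ω is finite with cardinality prime to p
  haveI : Finite Ω := Subtype.finite
  haveI : Fintype W := Fintype.ofFinite W
  haveI : Fintype Ω := Fintype.ofFinite Ω
  have hcardW : Fintype.card W = p ^ Module.finrank (ZMod p) W := by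
    have := Module.card_eq_pow_finrank (K := ZMod p) (V := W)
    rwa [ZMod.card] at this
  have hrk : Module.finrank (ZMod p) W ≠ 0 := by
    intro h
    rw [h, pow_zero] at hcardW
    haveI : Subsingleton W := Fintype.card_le_one_iff_subsingleton.mp hcardW.le
    exact hw (by simpa using Subsingleton.elim (⟨w, hwW⟩ : W) 0)
  have hpcardW : p ∣ Fintype.card W := hcardW ▸ dvd_pow_self p hrk
  have hcardΩ : Fintype.card Ω = Fintype.card W - 1 := by
    calc Fintype.card Ω = Fintype.card {v : W // ¬ (v = 0)} :=
          Fintype.card_congr (Equiv.subtypeEquivRight (by simp))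
      _ = Fintype.card W - Fintype.card {v : W // v = 0} := Fintype.card_subtype_compl _
      _ = Fintype.card W - 1 := by rw [Fintype.card_subtype_eq]
  have hndvd : ¬ p ∣ Nat.card Ω := by
    rw [Nat.card_eq_fintype_card, hcardΩ]
    intro hcon
    have h1 : Fintype.card W - (Fintype.card W - 1) = 1 := by
      have : 0 < Fintype.card W := Fintype.card_pos
      omega
    have := Nat.dvd_sub hpcardW hcon
    rw [h1] at this
    exact absurd (Nat.dvd_one.mp this) hp.one_lt.ne'
  -- the p-group fixed point theorem
  obtain ⟨v, hv⟩ := hPG.nonempty_fixed_point_of_prime_not_dvd_card Ω hndvd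
  rw [MulAction.mem_fixedPoints] at hv
  refine ⟨part1, ((v : W) : V), ?_, hWK (v : W).2, ?_⟩
  · intro h
    exact v.2 (Subtype.ext h)
  · intro g hg
    have := hv ⟨f ⟨g, hg⟩, ⟨⟨g, hg⟩, rfl⟩⟩
    have h2 : f ⟨g, hg⟩ v = v := this
    have h3 := congrArg (fun x : Ω => ((x : W) : V)) h2
    exact h3
end
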